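/- Let α = 2√3 − 3, γ = (3−√3)/2, and define f(x,y) := x²/2 + (γ − x)(1 − γ − y) + min{ y²/2 + y(1 − γ − y), (α/2)(1−γ)² }. Then for all (x,y) ∈ [0, γ] × [0, 1−γ]: f(x,y) + (γ − x)(x + y)/10 ≤ α/2. -/

import Mathlib

/-!
Put `t = γ − x ∈ [0, γ]`. Expanding, the left-hand side is
`γ²/2 + t·((1 − γ) − 9γ/10 + 2t/5 − 9y/10) + m(y)`, where `m(y)` is the minimum in `f`.
This is convex in `t`, so it lies below its chord, which is affine in `t` and has to be checked
only at the endpoints. At `t = 0` (`x = γ`) bound `m(y)` by the constant `(α/2)(1 − γ)²`; at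
`t = γ` (`x = 0`) bound it by the quadratic `y(1 − γ) − y²/2` and use `1 − γ ≤ 9γ/10`. Both
endpoints reduce to `γ²/2 + (α/2)(1 − γ)² = α/2` and `γ((1 − γ) − γ/2) = (α/2)(1 − γ)²`,
which are identities in `√3`; equality holds at `(0, 0)` and along `x = γ` for large `y`.
-/

open scoped Classical

noncomputable section

/-- The constant `α = 2√3 − 3`. -/
def alphaC : ℝ := 2 * Real.sqrt 3 - 3

/-- The constant `γ = (3 − √3)/2`. -/
def gammaC : ℝ := (3 - Real.sqrt 3) / 2

/-- The function `f(x,y)` from Proposition 6.2 of the paper. -/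
def fxy (x y : ℝ) : ℝ :=
  x ^ 2 / 2 + (gammaC - x) * (1 - gammaC - y) +
    min (y ^ 2 / 2 + y * (1 - gammaC - y)) ((alphaC / 2) * (1 - gammaC) ^ 2)

theorem add_mul_le_of_le_of_add_mul_le {a b t T K : ℝ} (h₀ : a ≤ K) (hT : a + T * b ≤ K)
    (ht₀ : 0 ≤ t) (htT : t ≤ T) : a + t * b ≤ K := by
  rcases le_total b 0 with hb | hb
  · nlinarith
  · nlinarith

theorem gammaC_sq_div_two_add_eq :
    gammaC ^ 2 / 2 + (alphaC / 2) * (1 - gammaC) ^ 2 = alphaC / 2 := by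
  have hs : Real.sqrt 3 ^ 2 = 3 := Real.sq_sqrt (by norm_num)
  unfold gammaC alphaC
  linear_combination ((Real.sqrt 3 - 3) / 4) * hs

theorem gammaC_mul_sub_eq :
    gammaC * (1 - gammaC - gammaC / 2) = (alphaC / 2) * (1 - gammaC) ^ 2 := by
  have hs : Real.sqrt 3 ^ 2 = 3 := Real.sq_sqrt (by norm_num)
  unfold gammaC alphaC
  linear_combination ((2 - Real.sqrt 3) / 4) * hs

theorem one_sub_gammaC_le : 1 - gammaC ≤ 9 * gammaC / 10 := by
  have hs : Real.sqrt 3 ^ 2 = 3 := Real.sq_sqrt (by norm_num)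
  have : Real.sqrt 3 ≤ 19 / 10 := by nlinarith [Real.sqrt_nonneg 3]
  unfold gammaC
  linarith

theorem fxy_add_eq (x y : ℝ) :
    fxy x y + (gammaC - x) * (x + y) / 10 =
      gammaC ^ 2 / 2 +
        (gammaC - x) * (1 - gammaC - 9 * gammaC / 10 + 2 * (gammaC - x) / 5 - 9 * y / 10) +
        min (y ^ 2 / 2 + y * (1 - gammaC - y)) ((alphaC / 2) * (1 - gammaC) ^ 2) := by
  unfold fxy
  ring

/-- **Proposition (the inequality for `f(x,y)`).** For all `(x,y) ∈ [0,γ] × [0,1−γ]`,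
`f(x,y) + (γ − x)(x + y)/10 ≤ α/2`. -/
theorem inequality_fxy (x y : ℝ) (hx : x ∈ Set.Icc (0 : ℝ) gammaC)
    (hy : y ∈ Set.Icc (0 : ℝ) (1 - gammaC)) :
    fxy x y + (gammaC - x) * (x + y) / 10 ≤ alphaC / 2 := by
  obtain ⟨hx₀, hxγ⟩ := hx
  set t := gammaC - x
  set q := y ^ 2 / 2 + y * (1 - gammaC - y) with hq_def
  set K := (alphaC / 2) * (1 - gammaC) ^ 2
  set m := min q K
  have ht₀ : 0 ≤ t := sub_nonneg.2 hxγ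
  have htγ : t ≤ gammaC := by linarith
  have h_endpoint : m + gammaC * (1 - gammaC - gammaC / 2 - 9 * y / 10) ≤ K := by
    have hq : q - 9 * gammaC * y / 10 ≤ 0 := by
      rw [hq_def]
      nlinarith [mul_nonneg hy.1 (sub_nonneg.2 one_sub_gammaC_le), sq_nonneg y]
    have hγK : gammaC * (1 - gammaC - gammaC / 2) = K := gammaC_mul_sub_eq
    linarith [min_le_left q K]
  calc fxy x y + t * (x + y) / 10
      = gammaC ^ 2 / 2 + t * (1 - gammaC - 9 * gammaC / 10 + 2 * t / 5 - 9 * y / 10) + m :=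
        fxy_add_eq x y
    _ ≤ gammaC ^ 2 / 2 + (m + t * (1 - gammaC - gammaC / 2 - 9 * y / 10)) := by
        nlinarith [mul_le_mul_of_nonneg_left htγ ht₀]
    _ ≤ gammaC ^ 2 / 2 + K := by
        gcongr
        exact add_mul_le_of_le_of_add_mul_le (min_le_right _ _) h_endpoint ht₀ htγ
    _ = alphaC / 2 := gammaC_sq_div_two_add_eq
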